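/- Let (U, 𝓑) be a measurable space in which all singletons are measurable, S ⊆ ℝ^r nonempty, U nonempty, and A, B : S × U → ℝ measurable in the second argument with B(α,u) > 0 for all (α,u) ∈ S × U. Suppose the test function C(α,u) = A(α,u)/B(α,u) is bounded above on S × U but does not attain its global maximum there. Then for every ε > 0 there exist α⁺(ε) ∈ S and u⁺(ε) ∈ U such that, with δ_{u⁺(ε)} the degenerate probability measure concentrated at u⁺(ε) and M = sup over all α ∈ S and admissible probability measures Ψ of I_α(Ψ), one has M − ε < I_{α⁺(ε)}(δ_{u⁺(ε)}) = A(α⁺(ε), u⁺(ε))/B(α⁺(ε), u⁺(ε)) < M. -/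

import Mathlib

/-!
Since `B > 0`, a pointwise bound `A ≤ M B` integrates against any probability measure `Ψ` to
`∫ A dΨ ≤ M ∫ B dΨ` with `∫ B dΨ > 0`, so the linear-fractional functional never exceeds the
supremum `M` of the test function `C = A / B`; conversely the Dirac measures realise every value
of `C`. Hence both suprema coincide, and as `M` is not attained, values of `C` close to `M` are
strictly below it.
-/

open MeasureTheory

section LinearFractional

variable {U : Type*} [MeasurableSpace U] {ι : Type*}

def testFunctionValues (S : Set ι) (A B : ι → U → ℝ) : Set ℝ :=
  {x | ∃ α ∈ S, ∃ u : U, x = A α u / B α u}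

def linearFractionalValues (S : Set ι) (A B : ι → U → ℝ) : Set ℝ :=
  {x | ∃ α ∈ S, ∃ Ψ : Measure U, IsProbabilityMeasure Ψ ∧
    Integrable (A α) Ψ ∧ Integrable (B α) Ψ ∧ x = (∫ u, A α u ∂Ψ) / (∫ u, B α u ∂Ψ)}

theorem integral_div_integral_dirac {f g : U → ℝ} (hf : Measurable f) (hg : Measurable g)
    (u : U) : (∫ v, f v ∂Measure.dirac u) / (∫ v, g v ∂Measure.dirac u) = f u / g u := by
  rw [integral_dirac' _ _ hf.stronglyMeasurable, integral_dirac' _ _ hg.stronglyMeasurable]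

theorem integral_div_integral_le_of_forall_div_le {μ : Measure U} [NeZero μ] {f g : U → ℝ}
    {M : ℝ} (hf : Integrable f μ) (hg : Integrable g μ) (hg_pos : ∀ u, 0 < g u)
    (hM : ∀ u, f u / g u ≤ M) : (∫ u, f u ∂μ) / (∫ u, g u ∂μ) ≤ M := by
  have hint_pos : 0 < ∫ u, g u ∂μ := by
    rw [integral_pos_iff_support_of_nonneg (fun u => (hg_pos u).le) hg,
      Function.support_eq_univ fun u => (hg_pos u).ne', Measure.measure_univ_pos]
    exact NeZero.ne μ
  have hle : ∀ u, f u ≤ M * g u := fun u => (div_le_iff₀ (hg_pos u)).mp (hM u)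
  rw [div_le_iff₀ hint_pos, ← integral_const_mul]
  exact integral_mono hf (hg.const_mul M) hle

theorem testFunctionValues_subset_linearFractionalValues {S : Set ι} {A B : ι → U → ℝ}
    (hA : ∀ α ∈ S, Measurable (A α)) (hB : ∀ α ∈ S, Measurable (B α)) :
    testFunctionValues S A B ⊆ linearFractionalValues S A B := by
  rintro _ ⟨α, hα, u, rfl⟩
  refine ⟨α, hα, Measure.dirac u, inferInstance,
    integrable_dirac' (hA α hα).stronglyMeasurable enorm_lt_top,
    integrable_dirac' (hB α hα).stronglyMeasurable enorm_lt_top, ?_⟩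
  rw [integral_div_integral_dirac (hA α hα) (hB α hα)]

theorem upperBounds_linearFractionalValues {S : Set ι} {A B : ι → U → ℝ}
    (hA : ∀ α ∈ S, Measurable (A α)) (hB : ∀ α ∈ S, Measurable (B α))
    (hB_pos : ∀ α ∈ S, ∀ u, 0 < B α u) :
    upperBounds (linearFractionalValues S A B) = upperBounds (testFunctionValues S A B) := by
  refine (upperBounds_mono_set (testFunctionValues_subset_linearFractionalValues hA hB)).antisymm
    fun M hM => ?_
  rintro _ ⟨α, hα, Ψ, _, hAΨ, hBΨ, rfl⟩
  exact integral_div_integral_le_of_forall_div_le hAΨ hBΨ (hB_pos α hα)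
    fun u => hM ⟨α, hα, u, rfl⟩

end LinearFractional

theorem stmt_10_general {r : ℕ} {U : Type*} [MeasurableSpace U] [Nonempty U]
    (S : Set (Fin r → ℝ)) (hS : S.Nonempty) (A B : (Fin r → ℝ) → U → ℝ)
    (hAmeas : ∀ α ∈ S, Measurable (A α)) (hBmeas : ∀ α ∈ S, Measurable (B α))
    (hB : ∀ α ∈ S, ∀ u : U, 0 < B α u)
    (hbdd : BddAbove {x : ℝ | ∃ α ∈ S, ∃ u : U, x = A α u / B α u})
    (hnotattained : ¬ ∃ αs ∈ S, ∃ us : U,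
        ∀ α ∈ S, ∀ u : U, A α u / B α u ≤ A αs us / B αs us) :
    ∀ ε > (0 : ℝ), ∃ αp ∈ S, ∃ up : U,
      (sSup {x : ℝ | ∃ α ∈ S, ∃ Ψ : Measure U, IsProbabilityMeasure Ψ ∧
          Integrable (A α) Ψ ∧ Integrable (B α) Ψ ∧
          x = (∫ u, A α u ∂Ψ) / (∫ u, B α u ∂Ψ)}) - ε
        < (∫ v, A αp v ∂(Measure.dirac up)) / (∫ v, B αp v ∂(Measure.dirac up)) ∧
      (∫ v, A αp v ∂(Measure.dirac up)) / (∫ v, B αp v ∂(Measure.dirac up))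
        = A αp up / B αp up ∧
      A αp up / B αp up
        < sSup {x : ℝ | ∃ α ∈ S, ∃ Ψ : Measure U, IsProbabilityMeasure Ψ ∧
            Integrable (A α) Ψ ∧ Integrable (B α) Ψ ∧
            x = (∫ u, A α u ∂Ψ) / (∫ u, B α u ∂Ψ)} := by
  change ∀ ε > 0, ∃ αp ∈ S, ∃ up : U,
    sSup (linearFractionalValues S A B) - ε < _ ∧ _ ∧ _ < sSup (linearFractionalValues S A B)
  obtain ⟨α₀, hα₀⟩ := hS
  have hT : (testFunctionValues S A B).Nonempty := ⟨_, α₀, hα₀, Classical.arbitrary U, rfl⟩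
  have hlub : IsLUB (linearFractionalValues S A B) (sSup (testFunctionValues S A B)) := by
    simpa only [IsLUB, upperBounds_linearFractionalValues hAmeas hBmeas hB]
      using isLUB_csSup hT hbdd
  have hnotmem : sSup (testFunctionValues S A B) ∉ testFunctionValues S A B := by
    rintro ⟨αs, hαs, us, hmax⟩
    exact hnotattained ⟨αs, hαs, us, fun α hα u => hmax ▸ le_csSup hbdd ⟨α, hα, u, rfl⟩⟩
  rw [hlub.csSup_eq (hT.mono (testFunctionValues_subset_linearFractionalValues hAmeas hBmeas))]
  intro ε hε
  obtain ⟨_, ⟨α, hα, u, rfl⟩, hgt, hlt⟩ := (isLUB_csSup hT hbdd).exists_between' hnotmem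
    (sub_lt_self _ hε)
  have hdirac := integral_div_integral_dirac (hAmeas α hα) (hBmeas α hα) u
  exact ⟨α, hα, u, hdirac ▸ hgt, hdirac, hlt⟩

/-- Theorem 2, assertion 1 (relation (27)): if the test function C(α,u) = A(α,u)/B(α,u)
is bounded above on S × U but does not attain its global maximum there, then for every
ε > 0 there is a pair (α⁺(ε), u⁺(ε)) ∈ S × U such that, with
M = sup over (α,Ψ) of I_α(Ψ), one has M - ε < I_{α⁺(ε)}(δ_{u⁺(ε)}) = C(α⁺(ε),u⁺(ε)) < M. -/
theorem stmt_10 {r : ℕ} {U : Type*} [MeasurableSpace U] [Nonempty U]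
    (hsing : ∀ u : U, MeasurableSet ({u} : Set U))
    (S : Set (Fin r → ℝ)) (hS : S.Nonempty) (A B : (Fin r → ℝ) → U → ℝ)
    (hAmeas : ∀ α ∈ S, Measurable (A α)) (hBmeas : ∀ α ∈ S, Measurable (B α))
    (hB : ∀ α ∈ S, ∀ u : U, 0 < B α u)
    (hbdd : BddAbove {x : ℝ | ∃ α ∈ S, ∃ u : U, x = A α u / B α u})
    (hnotattained : ¬ ∃ αs ∈ S, ∃ us : U,
        ∀ α ∈ S, ∀ u : U, A α u / B α u ≤ A αs us / B αs us) :
    ∀ ε > (0 : ℝ), ∃ αp ∈ S, ∃ up : U,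
      (sSup {x : ℝ | ∃ α ∈ S, ∃ Ψ : Measure U, IsProbabilityMeasure Ψ ∧
          Integrable (A α) Ψ ∧ Integrable (B α) Ψ ∧
          x = (∫ u, A α u ∂Ψ) / (∫ u, B α u ∂Ψ)}) - ε
        < (∫ v, A αp v ∂(Measure.dirac up)) / (∫ v, B αp v ∂(Measure.dirac up)) ∧
      (∫ v, A αp v ∂(Measure.dirac up)) / (∫ v, B αp v ∂(Measure.dirac up))
        = A αp up / B αp up ∧
      A αp up / B αp up
        < sSup {x : ℝ | ∃ α ∈ S, ∃ Ψ : Measure U, IsProbabilityMeasure Ψ ∧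
            Integrable (A α) Ψ ∧ Integrable (B α) Ψ ∧
            x = (∫ u, A α u ∂Ψ) / (∫ u, B α u ∂Ψ)} :=
  stmt_10_general S hS A B hAmeas hBmeas hB hbdd hnotattained
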